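/- Let τ be a Salem number and let z₁ and z₂ be two distinct nonreal conjugates of τ. Then the straight line in the complex plane passing through z₁ and z₂ does not pass through the point τ (regarded as a point on the real axis). -/

import Mathlib

/-- `z : ℂ` is a conjugate of the real algebraic number `τ`:
it is a complex root of the minimal polynomial of `τ` over `ℚ`. -/
def IsConjugateOf (z : ℂ) (τ : ℝ) : Prop :=
  Polynomial.aeval z (minpoly ℚ τ) = 0

/-- A Salem number: a real algebraic integer `τ > 1`, of degree at least 4,
conjugate to `τ⁻¹`, all of whose conjugates other than `τ` and `τ⁻¹`
have modulus 1. -/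
def IsSalem (τ : ℝ) : Prop :=
  1 < τ ∧ IsIntegral ℤ τ ∧ 4 ≤ (minpoly ℚ τ).natDegree ∧
    IsConjugateOf ((τ : ℂ))⁻¹ τ ∧
    ∀ z : ℂ, IsConjugateOf z τ → z ≠ (τ : ℂ) → z ≠ ((τ : ℂ))⁻¹ → ‖z‖ = 1


/-!
Put `t = τ + τ⁻¹` and `xᵢ = zᵢ + zᵢ⁻¹ = 2 Re zᵢ` (the `zᵢ` lie on the unit circle). The conjugates
of `t` are the `u + u⁻¹` for conjugates `u` of `τ`, so the `xᵢ` are conjugates of `t` and every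
conjugate of `t` other than `t` is real and lies in `(-2, 2)`. Computing the power of the point `τ`
with respect to the unit circle, collinearity of `z₁, z₂, τ` becomes `t (x₁ + x₂) - x₁ x₂ = 4`
with `x₁ ≠ x₂`. If `t` has a conjugate `y ∉ {t, x₁, x₂}`, an embedding sending `y` to `t` carries
this relation to three numbers in `(-2, 2)`, where `a (b + c) - b c < 4`. Otherwise the conjugates
of `t` are exactly `t, x₁, x₂`, an embedding sending `x₁` to `t` permutes them, and the transported
relation forces `x₁ = 0` or `x₂ = 0`, which is not a conjugate of `t ≠ 0`.
-/

open Polynomial IntermediateField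

theorem mul_add_sub_mul_lt_four {a b c : ℝ} (ha : |a| < 2) (hb : |b| < 2) (hc : |c| < 2) :
    a * (b + c) - b * c < 4 := by
  rw [abs_lt] at ha hb hc
  -- `(2 - a)(2 + b)(2 + c) + (2 + a)(2 - b)(2 - c) = 4 (4 - a (b + c) + b c)`
  have h₁ : 0 < (2 - a) * (2 + b) * (2 + c) := by
    apply mul_pos (mul_pos _ _) _ <;> linarith
  have h₂ : 0 < (2 + a) * (2 - b) * (2 - c) := by
    apply mul_pos (mul_pos _ _) _ <;> linarith
  linarith

theorem two_lt_add_inv_of_one_lt {x : ℝ} (hx : 1 < x) : 2 < x + x⁻¹ := by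
  have : x + x⁻¹ - 2 = (x - 1) ^ 2 / x := by field_simp; ring
  have : 0 < (x - 1) ^ 2 / x := div_pos (pow_pos (sub_pos.2 hx) 2) (one_pos.trans hx)
  linarith

section Collinear

variable {z₁ z₂ : ℂ} {p : ℝ}

theorem re_sub_mul_im_eq_of_collinear (h : Collinear ℝ ({z₁, z₂, (p : ℂ)} : Set ℂ)) :
    (z₁.re - p) * z₂.im = (z₂.re - p) * z₁.im := by
  obtain ⟨v, hv⟩ := (collinear_iff_of_mem (p₀ := (p : ℂ)) (by simp)).1 h
  obtain ⟨c₁, hc₁⟩ := hv z₁ (by simp)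
  obtain ⟨c₂, hc₂⟩ := hv z₂ (by simp)
  rw [hc₁, hc₂]
  simp
  ring

theorem re_sq_add_im_sq_of_norm_eq_one {z : ℂ} (hz : ‖z‖ = 1) : z.re ^ 2 + z.im ^ 2 = 1 := by
  rw [sq, sq, ← Complex.normSq_apply, Complex.normSq_eq_norm_sq, hz, one_pow]

theorem re_ne_re_of_collinear (h₁ : ‖z₁‖ = 1) (hne : z₁ ≠ z₂) (hp : 1 < |p|)
    (h : Collinear ℝ ({z₁, z₂, (p : ℂ)} : Set ℂ)) : z₁.re ≠ z₂.re := by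
  intro hre
  have hcol := re_sub_mul_im_eq_of_collinear h
  rw [← hre] at hcol
  have hp₁ : z₁.re = p := by
    have : (z₁.re - p) * (z₂.im - z₁.im) = 0 := by linear_combination hcol
    have him : z₂.im - z₁.im ≠ 0 := sub_ne_zero.2 fun him ↦ hne (Complex.ext hre him.symm)
    linarith [(mul_eq_zero.1 this).resolve_right him]
  have : |z₁.re| ≤ 1 := h₁ ▸ Complex.abs_re_le_norm z₁
  linarith [hp₁ ▸ this]

theorem re_add_re_mul_eq_of_collinear (h₁ : ‖z₁‖ = 1) (h₂ : ‖z₂‖ = 1) (hre : z₁.re ≠ z₂.re)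
    (h : Collinear ℝ ({z₁, z₂, (p : ℂ)} : Set ℂ)) :
    (z₁.re + z₂.re) * (1 + p ^ 2) = 2 * p * (1 + z₁.re * z₂.re) := by
  have hcol := re_sub_mul_im_eq_of_collinear h
  have n₁ := re_sq_add_im_sq_of_norm_eq_one h₁
  have n₂ := re_sq_add_im_sq_of_norm_eq_one h₂
  -- square the collinearity relation and eliminate the imaginary parts
  have : (z₁.re - z₂.re) * ((z₁.re + z₂.re) * (1 + p ^ 2) - 2 * p * (1 + z₁.re * z₂.re)) = 0 := by
    linear_combination ((z₁.re - p) * z₂.im + (z₂.re - p) * z₁.im) * hcol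
      - (z₁.re - p) ^ 2 * n₂ + (z₂.re - p) ^ 2 * n₁
  linear_combination (mul_eq_zero.1 this).resolve_left (sub_ne_zero.2 hre)

end Collinear

theorem exists_algHom_adjoin_apply_eq {F K : Type*} [Field F] [Field K] [Algebra F K]
    [IsAlgClosed K] {S : Set K} (hS : ∀ s ∈ S, IsIntegral F s) {x y : K}
    (hx : x ∈ adjoin F S) (hy : aeval y (minpoly F x) = 0) :
    ∃ φ : adjoin F S →ₐ[F] K, φ ⟨x, hx⟩ = y :=
  exists_algHom_adjoin_of_splits_of_aeval (fun s hs ↦ ⟨hS s hs, IsAlgClosed.splits _⟩) hx hy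

theorem aeval_algHom_apply_minpoly {F E K : Type*} [Field F] [Field E] [Field K] [Algebra F E]
    [Algebra F K] {L : IntermediateField F E} (φ : L →ₐ[F] K) (x : L) :
    aeval (φ x) (minpoly F (x : E)) = 0 := by
  rw [← minpoly_eq, ← minpoly.algHom_eq φ φ.injective]
  exact minpoly.aeval F _

theorem aeval_add_inv_minpoly_add_inv {α u : ℂ} (hα : IsIntegral ℚ α)
    (hu : aeval u (minpoly ℚ α) = 0) : aeval (u + u⁻¹) (minpoly ℚ (α + α⁻¹)) = 0 := by
  obtain ⟨φ, hφ⟩ := exists_algHom_adjoin_apply_eq (by simpa) (mem_adjoin_simple_self ℚ α) hu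
  have := aeval_algHom_apply_minpoly φ (AdjoinSimple.gen ℚ α + (AdjoinSimple.gen ℚ α)⁻¹)
  rwa [map_add, map_inv₀, AdjoinSimple.gen, hφ] at this

theorem exists_eq_add_inv_of_aeval_minpoly_add_inv {α y : ℂ} (hα : IsIntegral ℚ α)
    (hy : aeval y (minpoly ℚ (α + α⁻¹)) = 0) :
    ∃ u, aeval u (minpoly ℚ α) = 0 ∧ y = u + u⁻¹ := by
  have hgen := mem_adjoin_simple_self ℚ α
  obtain ⟨φ, hφ⟩ := exists_algHom_adjoin_apply_eq (by simpa) (add_mem hgen (inv_mem hgen)) hy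
  refine ⟨φ (AdjoinSimple.gen ℚ α), aeval_algHom_apply_minpoly φ _, ?_⟩
  rw [← hφ, ← map_inv₀, ← map_add]
  rfl

theorem isConjugateOf_iff {z : ℂ} {t : ℝ} :
    IsConjugateOf z t ↔ aeval z (minpoly ℚ (t : ℂ)) = 0 := by
  rw [← Complex.coe_algebraMap, minpoly.algebraMap_eq (algebraMap ℝ ℂ).injective]
  rfl

theorem isConjugateOf_self (t : ℝ) : IsConjugateOf t t := by
  rw [IsConjugateOf, ← Complex.coe_algebraMap, aeval_algebraMap_apply, minpoly.aeval, map_zero]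

noncomputable def conjugateField (t : ℝ) : IntermediateField ℚ ℂ :=
  adjoin ℚ {y | IsConjugateOf y t}

namespace IsConjugateOf

variable {a b c y z : ℂ} {t : ℝ}

def toConjugateField (h : IsConjugateOf y t) : conjugateField t := ⟨y, subset_adjoin ℚ _ h⟩

@[simp]
theorem coe_toConjugateField (h : IsConjugateOf y t) : (h.toConjugateField : ℂ) = y := rfl

theorem isIntegral (ht : IsIntegral ℚ t) (h : IsConjugateOf y t) : IsIntegral ℚ y :=
  ⟨minpoly ℚ t, minpoly.monic ht, h⟩

theorem minpoly_eq (ht : IsIntegral ℚ t) (h : IsConjugateOf y t) : minpoly ℚ y = minpoly ℚ t :=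
  (minpoly.eq_of_irreducible_of_monic (minpoly.irreducible ht) h (minpoly.monic ht)).symm

theorem ne_zero (ht : IsIntegral ℚ t) (ht₀ : t ≠ 0) (h : IsConjugateOf y t) : y ≠ 0 := by
  rintro rfl
  have hX := h.minpoly_eq ht
  rw [minpoly.zero] at hX
  have := minpoly.aeval ℚ t
  rw [← hX, aeval_X] at this
  exact ht₀ this

theorem natDegree_minpoly_eq_one_of_ratCast {q : ℚ} (ht : IsIntegral ℚ t)
    (h : IsConjugateOf q t) : (minpoly ℚ t).natDegree = 1 := by
  rw [← h.minpoly_eq ht, ← eq_ratCast (algebraMap ℚ ℂ), minpoly.eq_X_sub_C, natDegree_X_sub_C]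

theorem add_inv (ht : IsIntegral ℚ t) (h : IsConjugateOf z t) :
    IsConjugateOf (z + z⁻¹) (t + t⁻¹) := by
  rw [isConjugateOf_iff] at h ⊢
  push_cast
  exact aeval_add_inv_minpoly_add_inv ht.algebraMap h

theorem exists_algHom_apply_eq (ht : IsIntegral ℚ t) (ha : IsConjugateOf a t)
    (hb : IsConjugateOf b t) : ∃ φ : conjugateField t →ₐ[ℚ] ℂ, φ ha.toConjugateField = b :=
  exists_algHom_adjoin_apply_eq (fun _ hs ↦ isIntegral ht hs) _ (by rw [ha.minpoly_eq ht]; exact hb)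

theorem algHom_apply (ht : IsIntegral ℚ t) (φ : conjugateField t →ₐ[ℚ] ℂ)
    (ha : IsConjugateOf a t) : IsConjugateOf (φ ha.toConjugateField) t := by
  have := aeval_algHom_apply_minpoly φ ha.toConjugateField
  rwa [coe_toConjugateField, ha.minpoly_eq ht] at this

theorem algHom_apply_ne (φ : conjugateField t →ₐ[ℚ] ℂ) (ha : IsConjugateOf a t)
    (hb : IsConjugateOf b t) (hab : a ≠ b) : φ ha.toConjugateField ≠ φ hb.toConjugateField :=
  fun h ↦ hab (congrArg Subtype.val (φ.injective h))

theorem map_mul_add_sub_mul (φ : conjugateField t →ₐ[ℚ] ℂ) (ha : IsConjugateOf a t)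
    (hb : IsConjugateOf b t) (hc : IsConjugateOf c t) (h : a * (b + c) - b * c = 4) :
    φ ha.toConjugateField * (φ hb.toConjugateField + φ hc.toConjugateField)
      - φ hb.toConjugateField * φ hc.toConjugateField = 4 := by
  have : ha.toConjugateField * (hb.toConjugateField + hc.toConjugateField)
      - hb.toConjugateField * hc.toConjugateField = 4 := Subtype.ext (by push_cast; exact h)
  simpa [map_ofNat] using congrArg φ this

end IsConjugateOf

section Conjugates

variable {t : ℝ} {a b c x₁ x₂ : ℂ}

theorem mul_add_sub_mul_ne_four_of_isConjugateOf_ne (ht : IsIntegral ℚ t)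
    (hsmall : ∀ y : ℂ, IsConjugateOf y t → y ≠ t → ∃ r : ℝ, y = r ∧ |r| < 2)
    (ha : IsConjugateOf a t) (hb : IsConjugateOf b t) (hc : IsConjugateOf c t) {y : ℂ}
    (hy : IsConjugateOf y t) (hya : a ≠ y) (hyb : b ≠ y) (hyc : c ≠ y) :
    a * (b + c) - b * c ≠ 4 := by
  intro h
  obtain ⟨φ, hφ⟩ := hy.exists_algHom_apply_eq ht (isConjugateOf_self t)
  have small : ∀ {x} (hx : IsConjugateOf x t), x ≠ y →
      ∃ r : ℝ, φ hx.toConjugateField = r ∧ |r| < 2 := fun hx hxy ↦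
    hsmall _ (hx.algHom_apply ht φ) (hφ ▸ IsConjugateOf.algHom_apply_ne φ hx hy hxy)
  obtain ⟨ra, hra, hra₂⟩ := small ha hya
  obtain ⟨rb, hrb, hrb₂⟩ := small hb hyb
  obtain ⟨rc, hrc, hrc₂⟩ := small hc hyc
  have := IsConjugateOf.map_mul_add_sub_mul φ ha hb hc h
  rw [hra, hrb, hrc] at this
  exact (mul_add_sub_mul_lt_four hra₂ hrb₂ hrc₂).ne (by exact_mod_cast this)

theorem mul_add_sub_mul_ne_four_of_forall_isConjugateOf (ht : IsIntegral ℚ t) (ht₀ : t ≠ 0)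
    (h₁ : IsConjugateOf x₁ t) (h₂ : IsConjugateOf x₂ t) (hne : x₁ ≠ x₂) (h₁t : x₁ ≠ t)
    (h₂t : x₂ ≠ t) (hall : ∀ y : ℂ, IsConjugateOf y t → y = t ∨ y = x₁ ∨ y = x₂) :
    t * (x₁ + x₂) - x₁ * x₂ ≠ 4 := by
  intro h
  have hself := isConjugateOf_self t
  obtain ⟨φ, hφ⟩ := h₁.exists_algHom_apply_eq ht hself
  have hrel := IsConjugateOf.map_mul_add_sub_mul φ hself h₁ h₂ h
  rw [hφ] at hrel
  have hT : φ hself.toConjugateField ≠ t := fun e ↦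
    IsConjugateOf.algHom_apply_ne φ hself h₁ h₁t.symm (e.trans hφ.symm)
  have hX₂ : φ h₂.toConjugateField ≠ t := fun e ↦
    IsConjugateOf.algHom_apply_ne φ h₂ h₁ hne.symm (e.trans hφ.symm)
  have hTX₂ := IsConjugateOf.algHom_apply_ne φ hself h₂ h₂t.symm
  -- so `(φ t, φ x₂)` is `(x₁, x₂)` or `(x₂, x₁)`
  rcases hall _ (hself.algHom_apply ht φ) with hT' | hT' | hT' <;> [exact hT hT'; skip; skip] <;>
    rcases hall _ (h₂.algHom_apply ht φ) with hX₂' | hX₂' | hX₂' <;>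
    first | exact hX₂ hX₂' | exact hTX₂ (hT'.trans hX₂'.symm) | rw [hT', hX₂'] at hrel
  · have : x₂ * (x₁ - t) = 0 := by linear_combination (hrel - h) / 2
    exact mul_ne_zero (h₂.ne_zero ht ht₀) (sub_ne_zero.2 h₁t) this
  · have : x₁ * (x₂ - t) = 0 := by linear_combination (hrel - h) / 2
    exact mul_ne_zero (h₁.ne_zero ht ht₀) (sub_ne_zero.2 h₂t) this

theorem mul_add_sub_mul_ne_four (ht : IsIntegral ℚ t) (ht₂ : 2 < t)
    (hsmall : ∀ y : ℂ, IsConjugateOf y t → y ≠ t → ∃ r : ℝ, y = r ∧ |r| < 2)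
    (h₁ : IsConjugateOf x₁ t) (h₂ : IsConjugateOf x₂ t) (hne : x₁ ≠ x₂) :
    t * (x₁ + x₂) - x₁ * x₂ ≠ 4 := by
  intro h
  have ne_t : ∀ {x y : ℂ}, t * (x + y) - x * y = 4 → x ≠ t := by
    rintro x y hxy rfl
    have : t ^ 2 = 4 := by exact_mod_cast (by linear_combination hxy : (t : ℂ) ^ 2 = 4)
    nlinarith
  have h₁t := ne_t h
  have h₂t := ne_t (x := x₂) (y := x₁) (by linear_combination h)
  by_cases hall : ∀ y : ℂ, IsConjugateOf y t → y = t ∨ y = x₁ ∨ y = x₂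
  · exact mul_add_sub_mul_ne_four_of_forall_isConjugateOf ht (by positivity) h₁ h₂ hne h₁t h₂t
      hall h
  · push Not at hall
    obtain ⟨y, hy, hyt, hy₁, hy₂⟩ := hall
    exact mul_add_sub_mul_ne_four_of_isConjugateOf_ne ht hsmall (isConjugateOf_self t) h₁ h₂ hy
      hyt.symm hy₁.symm hy₂.symm h

end Conjugates

namespace IsSalem

variable {τ : ℝ} {z : ℂ}

theorem isIntegral (hτ : IsSalem τ) : IsIntegral ℚ τ := hτ.2.1.tower_top

theorem norm_eq_one (hτ : IsSalem τ) (h : IsConjugateOf z τ) (him : z.im ≠ 0) : ‖z‖ = 1 :=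
  hτ.2.2.2.2 z h (fun h ↦ him (by simp [h])) (fun h ↦ him (by simp [h, ← Complex.ofReal_inv]))

theorem exists_real_of_isConjugateOf_add_inv (hτ : IsSalem τ) {y : ℂ}
    (hy : IsConjugateOf y (τ + τ⁻¹)) (hne : y ≠ ↑(τ + τ⁻¹)) : ∃ r : ℝ, y = r ∧ |r| < 2 := by
  rw [isConjugateOf_iff, Complex.ofReal_add, Complex.ofReal_inv] at hy
  obtain ⟨u, hu, rfl⟩ := exists_eq_add_inv_of_aeval_minpoly_add_inv hτ.isIntegral.algebraMap hy
  rw [Complex.coe_algebraMap, ← isConjugateOf_iff] at hu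
  have hu₁ : ‖u‖ = 1 := hτ.2.2.2.2 u hu (by rintro rfl; simp at hne)
    (by rintro rfl; apply hne; push_cast; rw [inv_inv, add_comm])
  refine ⟨2 * u.re, by rw [Complex.inv_eq_conj hu₁, Complex.add_conj], ?_⟩
  have hre : |u.re| < 1 := by
    refine lt_of_le_of_ne (hu₁ ▸ Complex.abs_re_le_norm u) fun hre ↦ ?_
    have him : u.im = 0 := by
      have := re_sq_add_im_sq_of_norm_eq_one hu₁
      rw [← sq_abs, hre] at this
      simpa using this
    -- `u = ±1` would be a rational conjugate of `τ`, which has degree at least 4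
    obtain ⟨q, hq⟩ : ∃ q : ℚ, u = q := by
      rcases (abs_eq zero_le_one).1 hre with h | h
      · exact ⟨1, Complex.ext (by simp [h]) (by simp [him])⟩
      · exact ⟨-1, Complex.ext (by simp [h]) (by simp [him])⟩
    have := hτ.2.2.1
    rw [IsConjugateOf.natDegree_minpoly_eq_one_of_ratCast hτ.isIntegral (hq ▸ hu)] at this
    norm_num at this
  rw [abs_mul, abs_two]
  linarith

end IsSalem

theorem line_through_nonreal_conjugates_misses_salem (τ : ℝ) (hτ : IsSalem τ)
    (z₁ z₂ : ℂ) (h₁ : IsConjugateOf z₁ τ) (h₂ : IsConjugateOf z₂ τ)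
    (h₁im : z₁.im ≠ 0) (h₂im : z₂.im ≠ 0) (hne : z₁ ≠ z₂) :
    ¬ Collinear ℝ ({z₁, z₂, (τ : ℂ)} : Set ℂ) := by
  intro hcol
  have hz₁ := hτ.norm_eq_one h₁ h₁im
  have hz₂ := hτ.norm_eq_one h₂ h₂im
  have hre := re_ne_re_of_collinear hz₁ hne (hτ.1.trans_le (le_abs_self τ)) hcol
  have hrel := re_add_re_mul_eq_of_collinear hz₁ hz₂ hre hcol
  have two_re : ∀ {z : ℂ}, IsConjugateOf z τ → ‖z‖ = 1 →
      IsConjugateOf (2 * z.re : ℝ) (τ + τ⁻¹) := fun h hz ↦ by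
    simpa [Complex.inv_eq_conj hz, Complex.add_conj] using h.add_inv hτ.isIntegral
  refine mul_add_sub_mul_ne_four (hτ.isIntegral.add hτ.isIntegral.inv)
    (two_lt_add_inv_of_one_lt hτ.1)
    (fun _ ↦ hτ.exists_real_of_isConjugateOf_add_inv) (two_re h₁ hz₁) (two_re h₂ hz₂)
    (by exact_mod_cast mul_right_injective₀ two_ne_zero |>.ne hre) ?_
  have hτ₀ : τ ≠ 0 := (one_pos.trans hτ.1).ne'
  exact_mod_cast (show (τ + τ⁻¹) * (2 * z₁.re + 2 * z₂.re) - 2 * z₁.re * (2 * z₂.re) = 4 by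
    field_simp
    linear_combination 2 * hrel)
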